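/- arXiv:1012.4414 — 2 statements merged into one kernel-verified Lean document; each statement's English description precedes it below -/
import Mathlib

section
/- Let k ≥ 1 and n ≥ 2k+1 be integers. If u : ℝⁿ∖{0} → ℝ is smooth, positively homogeneous of degree 2k−n, and satisfies Δ₀ᵏ u = 0 on ℝⁿ∖{0}, then there exists a constant c ∈ ℝ such that u(x) = c · ‖x‖^{2k−n} for all x ≠ 0. -/
open MeasureTheory Real

/-- The geometric Laplacian `Δ₀ f = -∑ ∂²f/∂xᵢ²` on Euclidean space. -/
noncomputable def lap {n : ℕ} (f : EuclideanSpace ℝ (Fin n) → ℝ) :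
    EuclideanSpace ℝ (Fin n) → ℝ :=
  fun x => - ∑ i : Fin n,
    fderiv ℝ (fun y => fderiv ℝ f y (EuclideanSpace.single i 1)) x (EuclideanSpace.single i 1)

/-- The `k`-fold iterate `Δ₀ᵏ` of the geometric Laplacian. -/
noncomputable def lapIter {n : ℕ} (k : ℕ) :
    (EuclideanSpace ℝ (Fin n) → ℝ) → (EuclideanSpace ℝ (Fin n) → ℝ) :=
  lap^[k]

namespace RadialProof

open scoped RealInnerProductSpace

variable {n : ℕ}

/-- basis vectors -/
noncomputable abbrev eb (n : ℕ) (i : Fin n) : EuclideanSpace ℝ (Fin n) :=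
  EuclideanSpace.single i 1

/-- the punctured space -/
def S (n : ℕ) : Set (EuclideanSpace ℝ (Fin n)) := {(0 : EuclideanSpace ℝ (Fin n))}ᶜ

lemma isOpen_S : IsOpen (S n) := isOpen_compl_singleton

lemma mem_S {x : EuclideanSpace ℝ (Fin n)} : x ∈ S n ↔ x ≠ 0 := Iff.rfl

/-- squared norm -/
noncomputable def rho (x : EuclideanSpace ℝ (Fin n)) : ℝ := ⟪x, x⟫

lemma rho_eq_norm_sq (x : EuclideanSpace ℝ (Fin n)) : rho x = ‖x‖ ^ 2 :=
  real_inner_self_eq_norm_sq x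

lemma rho_pos {x : EuclideanSpace ℝ (Fin n)} (hx : x ≠ 0) : 0 < rho x := by
  rw [rho_eq_norm_sq]
  have : ‖x‖ ≠ 0 := norm_ne_zero_iff.mpr hx
  positivity

lemma rho_nonneg (x : EuclideanSpace ℝ (Fin n)) : 0 ≤ rho x := by
  rw [rho_eq_norm_sq]; positivity

lemma rho_ne_zero {x : EuclideanSpace ℝ (Fin n)} (hx : x ≠ 0) : rho x ≠ 0 :=
  (rho_pos hx).ne'

/-- expansion of a continuous linear functional over the basis -/
lemma clm_eq_sum (L : EuclideanSpace ℝ (Fin n) →L[ℝ] ℝ) (x : EuclideanSpace ℝ (Fin n)) :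
    L x = ∑ i : Fin n, x i * L (eb n i) := by
  have hx : x = ∑ i : Fin n, x i • eb n i := by
    have := (EuclideanSpace.basisFun (Fin n) ℝ).sum_repr x
    simpa [EuclideanSpace.basisFun_apply, EuclideanSpace.basisFun_repr] using this.symm
  conv_lhs => rw [hx]
  rw [map_sum]
  simp [smul_eq_mul]

lemma hasFDerivAt_rho (x : EuclideanSpace ℝ (Fin n)) :
    HasFDerivAt rho ((2 : ℝ) • (innerSL ℝ x : EuclideanSpace ℝ (Fin n) →L[ℝ] ℝ)) x := by
  have h := (hasFDerivAt_id x).inner ℝ (hasFDerivAt_id x)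
  refine h.congr_fderiv ?_
  ext v
  simp only [ContinuousLinearMap.smul_apply, innerSL_apply_apply, smul_eq_mul,
    ContinuousLinearMap.comp_apply, ContinuousLinearMap.prod_apply,
    ContinuousLinearMap.coe_id', id, fderivInnerCLM_apply]
  rw [real_inner_comm v x]
  ring

lemma contDiff_rho : ContDiff ℝ (⊤ : ℕ∞) (rho (n := n)) :=
  contDiff_id.inner ℝ contDiff_id

lemma fderiv_rho_apply (x : EuclideanSpace ℝ (Fin n)) (v : EuclideanSpace ℝ (Fin n)) :
    fderiv ℝ rho x v = 2 * ⟪x, v⟫ := by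
  rw [(hasFDerivAt_rho x).fderiv]; simp

lemma inner_eb (x : EuclideanSpace ℝ (Fin n)) (i : Fin n) : ⟪x, eb n i⟫ = x i := by
  rw [real_inner_comm]
  simpa using EuclideanSpace.inner_single_left (𝕜 := ℝ) i 1 x

/-- partial derivative -/
noncomputable def pd (f : EuclideanSpace ℝ (Fin n) → ℝ) (i : Fin n) :
    EuclideanSpace ℝ (Fin n) → ℝ :=
  fun y => fderiv ℝ f y (eb n i)

lemma lap_eq (f : EuclideanSpace ℝ (Fin n) → ℝ) (x : EuclideanSpace ℝ (Fin n)) :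
    lap f x = - ∑ i : Fin n, fderiv ℝ (pd f i) x (eb n i) := rfl

/-- notation for smooth on punctured space -/
def Sm (f : EuclideanSpace ℝ (Fin n) → ℝ) : Prop := ContDiffOn ℝ (⊤ : ℕ∞) f (S n)

lemma Sm.diffAt {f : EuclideanSpace ℝ (Fin n) → ℝ} (hf : Sm f)
    {x : EuclideanSpace ℝ (Fin n)} (hx : x ∈ S n) : DifferentiableAt ℝ f x :=
  (hf.differentiableOn (by simp)).differentiableAt (isOpen_S.mem_nhds hx)

lemma smPd {f : EuclideanSpace ℝ (Fin n) → ℝ} (hf : Sm f) (i : Fin n) : Sm (pd f i) :=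
  (hf.fderiv_of_isOpen isOpen_S (by simp)).clm_apply contDiffOn_const

lemma pdDiffAt {f : EuclideanSpace ℝ (Fin n) → ℝ} (hf : Sm f) (i : Fin n)
    {x : EuclideanSpace ℝ (Fin n)} (hx : x ∈ S n) : DifferentiableAt ℝ (pd f i) x :=
  (smPd hf i).diffAt hx

lemma smLap {f : EuclideanSpace ℝ (Fin n) → ℝ} (hf : Sm f) : Sm (lap f) := by
  have : ∀ i : Fin n, Sm (fun x => fderiv ℝ (pd f i) x (eb n i)) := fun i =>
    ((smPd hf i).fderiv_of_isOpen isOpen_S (by simp)).clm_apply contDiffOn_const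
  exact (ContDiffOn.sum (fun i _ => this i)).neg

lemma eventually_eq_of_S {f g : EuclideanSpace ℝ (Fin n) → ℝ}
    (h : ∀ y ∈ S n, f y = g y) {x : EuclideanSpace ℝ (Fin n)} (hx : x ∈ S n) :
    f =ᶠ[nhds x] g :=
  Filter.eventuallyEq_of_mem (isOpen_S.mem_nhds hx) h

lemma pd_congr {f g : EuclideanSpace ℝ (Fin n) → ℝ}
    (h : ∀ y ∈ S n, f y = g y) {x : EuclideanSpace ℝ (Fin n)} (hx : x ∈ S n) (i : Fin n) :
    pd f i x = pd g i x := by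
  unfold pd
  rw [(eventually_eq_of_S h hx).fderiv_eq]

lemma lap_congr {f g : EuclideanSpace ℝ (Fin n) → ℝ}
    (h : ∀ y ∈ S n, f y = g y) {x : EuclideanSpace ℝ (Fin n)} (hx : x ∈ S n) :
    lap f x = lap g x := by
  rw [lap_eq, lap_eq]
  congr 1
  refine Finset.sum_congr rfl (fun i _ => ?_)
  rw [(eventually_eq_of_S (fun y hy => pd_congr h hy i) hx).fderiv_eq]

lemma pd_const_mul {f : EuclideanSpace ℝ (Fin n) → ℝ} (hf : Sm f) (c : ℝ)
    {x : EuclideanSpace ℝ (Fin n)} (hx : x ∈ S n) (i : Fin n) :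
    pd (fun y => c * f y) i x = c * pd f i x := by
  unfold pd
  rw [fderiv_const_mul (hf.diffAt hx) c]
  simp

lemma pd_sub_const {f : EuclideanSpace ℝ (Fin n) → ℝ} (c : ℝ)
    {x : EuclideanSpace ℝ (Fin n)} (i : Fin n) :
    pd (fun y => f y - c) i x = pd f i x := by
  unfold pd
  rw [fderiv_sub_const]

lemma pd_mul {f g : EuclideanSpace ℝ (Fin n) → ℝ} (hf : Sm f) (hg : Sm g)
    {x : EuclideanSpace ℝ (Fin n)} (hx : x ∈ S n) (i : Fin n) :
    pd (fun y => f y * g y) i x = f x * pd g i x + g x * pd f i x := by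
  unfold pd
  rw [fderiv_fun_mul (hf.diffAt hx) (hg.diffAt hx)]
  simp

lemma pd_sum {ι : Type*} (t : Finset ι) {F : ι → EuclideanSpace ℝ (Fin n) → ℝ}
    (hF : ∀ j ∈ t, Sm (F j)) {x : EuclideanSpace ℝ (Fin n)} (hx : x ∈ S n) (i : Fin n) :
    pd (fun y => ∑ j ∈ t, F j y) i x = ∑ j ∈ t, pd (F j) i x := by
  unfold pd
  rw [fderiv_fun_sum (fun j hj => (hF j hj).diffAt hx)]
  simp

lemma lap_const_mul {f : EuclideanSpace ℝ (Fin n) → ℝ} (hf : Sm f) (c : ℝ)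
    {x : EuclideanSpace ℝ (Fin n)} (hx : x ∈ S n) :
    lap (fun y => c * f y) x = c * lap f x := by
  rw [lap_eq, lap_eq]
  have : ∀ i : Fin n, fderiv ℝ (pd (fun y => c * f y) i) x (eb n i)
      = c * fderiv ℝ (pd f i) x (eb n i) := by
    intro i
    rw [(eventually_eq_of_S (fun y hy => pd_const_mul hf c hy i) hx).fderiv_eq]
    rw [fderiv_const_mul (pdDiffAt hf i hx) c]
    simp
  simp_rw [this]
  rw [← Finset.mul_sum]
  ring

lemma lap_sub_const {f : EuclideanSpace ℝ (Fin n) → ℝ} (c : ℝ)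
    {x : EuclideanSpace ℝ (Fin n)} :
    lap (fun y => f y - c) x = lap f x := by
  rw [lap_eq, lap_eq]
  congr 1
  refine Finset.sum_congr rfl (fun i _ => ?_)
  have : (pd (fun y => f y - c) i) = pd f i := by
    funext y; exact pd_sub_const c i
  rw [this]

lemma lap_sum {ι : Type*} (t : Finset ι) {F : ι → EuclideanSpace ℝ (Fin n) → ℝ}
    (hF : ∀ j ∈ t, Sm (F j)) {x : EuclideanSpace ℝ (Fin n)} (hx : x ∈ S n) :
    lap (fun y => ∑ j ∈ t, F j y) x = ∑ j ∈ t, lap (F j) x := by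
  rw [lap_eq]
  have : ∀ i : Fin n,
      fderiv ℝ (pd (fun y => ∑ j ∈ t, F j y) i) x (eb n i)
      = ∑ j ∈ t, fderiv ℝ (pd (F j) i) x (eb n i) := by
    intro i
    rw [(eventually_eq_of_S (fun y hy => pd_sum t hF hy i) hx).fderiv_eq]
    rw [fderiv_fun_sum (fun j hj => (smPd (hF j hj) i).diffAt hx)]
    simp
  simp_rw [this]
  rw [Finset.sum_comm]
  simp [lap_eq, Finset.sum_neg_distrib]

/-- the second-order product rule for `lap` -/
lemma lap_mul {f g : EuclideanSpace ℝ (Fin n) → ℝ} (hf : Sm f) (hg : Sm g)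
    {x : EuclideanSpace ℝ (Fin n)} (hx : x ∈ S n) :
    lap (fun y => f y * g y) x
      = f x * lap g x + g x * lap f x - 2 * ∑ i : Fin n, pd f i x * pd g i x := by
  rw [lap_eq]
  have : ∀ i : Fin n,
      fderiv ℝ (pd (fun y => f y * g y) i) x (eb n i)
      = f x * fderiv ℝ (pd g i) x (eb n i) + g x * fderiv ℝ (pd f i) x (eb n i)
        + 2 * (pd f i x * pd g i x) := by
    intro i
    rw [(eventually_eq_of_S (fun y hy => pd_mul hf hg hy i) hx).fderiv_eq]
    rw [fderiv_fun_add ((hf.diffAt hx).fun_mul (pdDiffAt hg i hx))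
      ((hg.diffAt hx).fun_mul (pdDiffAt hf i hx))]
    rw [fderiv_fun_mul (hf.diffAt hx) (pdDiffAt hg i hx),
      fderiv_fun_mul (hg.diffAt hx) (pdDiffAt hf i hx)]
    simp only [ContinuousLinearMap.add_apply, ContinuousLinearMap.smul_apply, smul_eq_mul]
    unfold pd
    ring
  simp_rw [this]
  rw [Finset.sum_add_distrib, Finset.sum_add_distrib, ← Finset.mul_sum, ← Finset.mul_sum,
    ← Finset.mul_sum]
  simp only [lap_eq]
  ring


/-- positively homogeneous of degree β on the punctured space -/
def HomOn (β : ℝ) (w : EuclideanSpace ℝ (Fin n) → ℝ) : Prop :=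
  ∀ t : ℝ, 0 < t → ∀ x : EuclideanSpace ℝ (Fin n), x ≠ 0 → w (t • x) = t ^ β * w x

lemma smul_mem_S {t : ℝ} (ht : 0 < t) {x : EuclideanSpace ℝ (Fin n)} (hx : x ≠ 0) :
    t • x ≠ 0 := smul_ne_zero ht.ne' hx

lemma fderiv_comp_smul {f : EuclideanSpace ℝ (Fin n) → ℝ} {t : ℝ}
    {x v : EuclideanSpace ℝ (Fin n)} (h : DifferentiableAt ℝ f (t • x)) :
    fderiv ℝ (fun y => f (t • y)) x v = t * fderiv ℝ f (t • x) v := by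
  have hlin : HasFDerivAt (fun y : EuclideanSpace ℝ (Fin n) => t • y)
      (t • ContinuousLinearMap.id ℝ (EuclideanSpace ℝ (Fin n))) x :=
    (t • ContinuousLinearMap.id ℝ (EuclideanSpace ℝ (Fin n))).hasFDerivAt
  have hcomp : HasFDerivAt (fun y => f (t • y))
      ((fderiv ℝ f (t • x)).comp (t • ContinuousLinearMap.id ℝ (EuclideanSpace ℝ (Fin n)))) x :=
    h.hasFDerivAt.comp x hlin
  rw [hcomp.fderiv]
  simp [mul_comm]

lemma hom_pd_applied {β : ℝ} {w : EuclideanSpace ℝ (Fin n) → ℝ} (hw : Sm w)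
    (hhom : HomOn β w) {t : ℝ} (ht : 0 < t) {x : EuclideanSpace ℝ (Fin n)} (hx : x ≠ 0)
    (v : EuclideanSpace ℝ (Fin n)) :
    fderiv ℝ w (t • x) v = t ^ (β - 1) * fderiv ℝ w x v := by
  have h1 : ∀ y ∈ S n, w (t • y) = t ^ β * w y := fun y hy => hhom t ht y hy
  have h2 : fderiv ℝ (fun y => w (t • y)) x v = fderiv ℝ (fun y => t ^ β * w y) x v := by
    rw [(eventually_eq_of_S h1 hx).fderiv_eq]
  rw [fderiv_comp_smul (hw.diffAt (smul_mem_S ht hx))] at h2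
  rw [fderiv_const_mul (hw.diffAt hx)] at h2
  simp only [ContinuousLinearMap.smul_apply, smul_eq_mul] at h2
  have hrw : t ^ (β - 1) = t ^ β / t := by rw [Real.rpow_sub ht, Real.rpow_one]
  rw [hrw, div_mul_eq_mul_div, eq_div_iff ht.ne']
  linarith [h2]

lemma hom_pd {β : ℝ} {w : EuclideanSpace ℝ (Fin n) → ℝ} (hw : Sm w)
    (hhom : HomOn β w) (i : Fin n) : HomOn (β - 1) (pd w i) :=
  fun t ht x hx => hom_pd_applied hw hhom ht hx (eb n i)

lemma hom_euler {β : ℝ} {w : EuclideanSpace ℝ (Fin n) → ℝ} (hw : Sm w)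
    (hhom : HomOn β w) {x : EuclideanSpace ℝ (Fin n)} (hx : x ≠ 0) :
    fderiv ℝ w x x = β * w x := by
  have hsm : HasDerivAt (fun s : ℝ => s • x) x 1 := by
    simpa using (hasDerivAt_id (1 : ℝ)).smul_const x
  have h0 : HasFDerivAt w (fderiv ℝ w x) ((1:ℝ) • x) := by
    rw [one_smul]; exact (hw.diffAt hx).hasFDerivAt
  have hφ : HasDerivAt (fun s : ℝ => w (s • x)) (fderiv ℝ w x x) 1 := by
    exact h0.comp_hasDerivAt 1 hsm
  have hψ : HasDerivAt (fun s : ℝ => s ^ β * w x) (β * w x) 1 := by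
    have := (Real.hasDerivAt_rpow_const (x := (1:ℝ)) (p := β) (Or.inl one_ne_zero)).mul_const (w x)
    simpa using this
  have heq : (fun s : ℝ => w (s • x)) =ᶠ[nhds (1:ℝ)] (fun s : ℝ => s ^ β * w x) := by
    have : ∀ᶠ s in nhds (1:ℝ), 0 < s := eventually_gt_nhds one_pos
    filter_upwards [this] with s hs
    exact hhom s hs x hx
  exact (hφ.congr_of_eventuallyEq heq.symm).unique hψ

lemma hom_lap {β : ℝ} {w : EuclideanSpace ℝ (Fin n) → ℝ} (hw : Sm w)
    (hhom : HomOn β w) : HomOn (β - 2) (lap w) := by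
  intro t ht x hx
  have hA : ∀ y ∈ S n, w (t • y) = t ^ β * w y := fun y hy => hhom t ht y hy
  -- lap of y ↦ w (t • y) at x equals t ^ β * lap w x
  have h1 : lap (fun y => w (t • y)) x = t ^ β * lap w x := by
    rw [lap_congr hA hx, lap_const_mul hw (t ^ β) hx]
  -- and also equals t ^ 2 * lap w (t • x)
  have hpdA : ∀ i : Fin n, ∀ y ∈ S n,
      pd (fun z => w (t • z)) i y = t * pd w i (t • y) := by
    intro i y hy
    exact fderiv_comp_smul (hw.diffAt (smul_mem_S ht hy))
  have h2 : lap (fun y => w (t • y)) x = t ^ (2:ℕ) * lap w (t • x) := by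
    rw [lap_eq, lap_eq]
    have : ∀ i : Fin n, fderiv ℝ (pd (fun z => w (t • z)) i) x (eb n i)
        = t ^ (2:ℕ) * fderiv ℝ (pd w i) (t • x) (eb n i) := by
      intro i
      rw [(eventually_eq_of_S (hpdA i) hx).fderiv_eq]
      rw [fderiv_const_mul]
      · simp only [ContinuousLinearMap.smul_apply, smul_eq_mul]
        rw [fderiv_comp_smul (pdDiffAt hw i (smul_mem_S ht hx))]
        ring
      · exact DifferentiableAt.comp x (pdDiffAt hw i (smul_mem_S ht hx))
          ((t • ContinuousLinearMap.id ℝ (EuclideanSpace ℝ (Fin n))).differentiableAt)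
    simp_rw [this]
    rw [← Finset.mul_sum]
    ring
  have ht2 : (t : ℝ) ^ (2:ℕ) ≠ 0 := pow_ne_zero 2 ht.ne'
  have key : lap w (t • x) = t ^ β / t ^ (2:ℕ) * lap w x := by
    field_simp
    rw [← h1, h2]
    ring
  have hrw : t ^ (β - 2) = t ^ β / t ^ (2:ℕ) := by
    rw [Real.rpow_sub ht, ← Real.rpow_natCast t 2]
    norm_num
  rw [key, hrw]

lemma rho_smul (t : ℝ) (x : EuclideanSpace ℝ (Fin n)) : rho (t • x) = t ^ (2:ℕ) * rho x := by
  unfold rho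
  rw [real_inner_smul_left, real_inner_smul_right]
  ring

lemma hom_rho_rpow (γ : ℝ) : HomOn (n := n) (2 * γ) (fun x => rho x ^ γ) := by
  intro t ht x hx
  show rho (t • x) ^ γ = t ^ (2 * γ) * rho x ^ γ
  rw [rho_smul]
  rw [Real.mul_rpow (by positivity) (rho_nonneg x)]
  congr 1
  rw [← Real.rpow_natCast t 2, ← Real.rpow_mul ht.le]
  norm_num

lemma hom_mul {β γ : ℝ} {f g : EuclideanSpace ℝ (Fin n) → ℝ}
    (hf : HomOn β f) (hg : HomOn γ g) : HomOn (β + γ) (fun x => f x * g x) := by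
  intro t ht x hx
  show f (t • x) * g (t • x) = _
  rw [hf t ht x hx, hg t ht x hx, Real.rpow_add ht]
  ring

lemma hom_congr {β : ℝ} {f g : EuclideanSpace ℝ (Fin n) → ℝ}
    (h : ∀ y ∈ S n, f y = g y) (hf : HomOn β f) : HomOn β g := by
  intro t ht x hx
  rw [← h _ (smul_mem_S ht hx), ← h _ hx]
  exact hf t ht x hx

-- SEC4: maximum principle
lemma second_deriv_nonpos_of_isLocalMax {g g' : ℝ → ℝ} {a : ℝ}
    (h1 : ∀ᶠ t in nhds (0 : ℝ), HasDerivAt g (g' t) t)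
    (h2 : HasDerivAt g' a 0) (hmax : IsLocalMax g 0) : a ≤ 0 := by
  by_contra hcon
  push_neg at hcon
  have hg'0 : g' 0 = 0 := hmax.hasDerivAt_eq_zero h1.self_of_nhds
  -- slope of g' tends to a > 0, hence g' > 0 on a right neighborhood
  have hslope : Filter.Tendsto (slope g' 0) (nhdsWithin 0 (Set.Ioi 0)) (nhds a) :=
    (hasDerivAt_iff_tendsto_slope.mp h2).mono_left
      (nhdsWithin_mono 0 (fun t ht => ne_of_gt ht))
  have hpos : ∀ᶠ t in nhdsWithin (0:ℝ) (Set.Ioi 0), 0 < slope g' 0 t :=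
    hslope.eventually (eventually_gt_nhds hcon)
  have hg'pos : ∀ᶠ t in nhdsWithin (0:ℝ) (Set.Ioi 0), 0 < g' t := by
    filter_upwards [hpos, self_mem_nhdsWithin] with t ht ht'
    have : slope g' 0 t = g' t / t := by
      simp [slope_def_field, hg'0]
    rw [this] at ht
    have htpos : (0:ℝ) < t := ht'
    rcases div_pos_iff.mp ht with ⟨h, _⟩ | ⟨_, h⟩
    · exact h
    · linarith
  -- get a small interval
  obtain ⟨δ₁, hδ₁, hI₁⟩ := Metric.mem_nhdsWithin_iff.mp hg'pos
  obtain ⟨δ₂, hδ₂, hI₂⟩ := Metric.eventually_nhds_iff.mp h1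
  obtain ⟨δ₃, hδ₃, hI₃⟩ := Metric.eventually_nhds_iff.mp hmax
  set δ := min δ₁ (min δ₂ δ₃) / 2 with hδdef
  have hδpos : 0 < δ := by positivity
  have hm₁ : min δ₁ (min δ₂ δ₃) ≤ δ₁ := min_le_left _ _
  have hm₂ : min δ₁ (min δ₂ δ₃) ≤ δ₂ := (min_le_right _ _).trans (min_le_left _ _)
  have hm₃ : min δ₁ (min δ₂ δ₃) ≤ δ₃ := (min_le_right _ _).trans (min_le_right _ _)
  have hδlt₁ : δ < δ₁ := by rw [hδdef]; linarith
  have hδlt₂ : δ < δ₂ := by rw [hδdef]; linarith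
  have hδlt₃ : δ < δ₃ := by rw [hδdef]; linarith
  -- g is strictly monotone on [0, δ]
  have hderiv : ∀ t ∈ Set.Icc (0:ℝ) δ, HasDerivAt g (g' t) t := by
    intro t ht
    apply hI₂
    rw [Real.dist_eq, sub_zero, abs_of_nonneg ht.1]
    exact lt_of_le_of_lt ht.2 hδlt₂
  have hcont : ContinuousOn g (Set.Icc (0:ℝ) δ) := fun t ht =>
    ((hderiv t ht).continuousAt).continuousWithinAt
  have hmono : StrictMonoOn g (Set.Icc (0:ℝ) δ) := by
    apply strictMonoOn_of_deriv_pos (convex_Icc 0 δ) hcont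
    intro t ht
    rw [interior_Icc] at ht
    rw [(hderiv t ⟨ht.1.le, ht.2.le⟩).deriv]
    apply hI₁
    constructor
    · rw [Metric.mem_ball, Real.dist_eq, sub_zero, abs_of_nonneg ht.1.le]
      exact lt_trans ht.2 hδlt₁
    · exact ht.1
  have hlt : g 0 < g δ := hmono (Set.left_mem_Icc.mpr hδpos.le)
    (Set.right_mem_Icc.mpr hδpos.le) hδpos
  have : g δ ≤ g 0 := by
    apply hI₃
    rw [Real.dist_eq, sub_zero, abs_of_nonneg hδpos.le]
    exact hδlt₃
  linarith

lemma lap_nonneg_of_isLocalMax {f : EuclideanSpace ℝ (Fin n) → ℝ} (hf : Sm f)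
    {x₀ : EuclideanSpace ℝ (Fin n)} (hx₀ : x₀ ∈ S n) (hmax : IsLocalMax f x₀) :
    0 ≤ lap f x₀ := by
  rw [lap_eq]
  rw [neg_nonneg]
  apply Finset.sum_nonpos
  intro i _
  -- the line through x₀ in direction eb n i
  set L : ℝ → EuclideanSpace ℝ (Fin n) := fun t => x₀ + t • eb n i with hL
  have hL0 : L 0 = x₀ := by simp [hL]
  have hLt : ∀ t : ℝ, HasDerivAt L (eb n i) t := fun t => by
    have h := ((hasDerivAt_id t).smul_const (eb n i)).const_add x₀
    rw [one_smul] at h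
    exact h
  have hLcont : Filter.Tendsto L (nhds 0) (nhds x₀) := by
    rw [← hL0]
    exact (hLt 0).continuousAt.tendsto
  have hLS : ∀ᶠ t in nhds (0:ℝ), L t ∈ S n := hLcont.eventually (isOpen_S.eventually_mem hx₀)
  have h1 : ∀ᶠ t in nhds (0:ℝ), HasDerivAt (fun s => f (L s)) (pd f i (L t)) t := by
    filter_upwards [hLS] with t ht
    exact (hf.diffAt ht).hasFDerivAt.comp_hasDerivAt t (hLt t)
  have h2 : HasDerivAt (fun t => pd f i (L t)) (fderiv ℝ (pd f i) x₀ (eb n i)) 0 := by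
    have hD := ((smPd hf i).diffAt hx₀).hasFDerivAt
    rw [← hL0] at hD
    have := hD.comp_hasDerivAt 0 (hLt 0)
    simpa [hL0, Function.comp_def] using this
  have hmax' : IsLocalMax (fun t => f (L t)) 0 := by
    unfold IsLocalMax IsMaxFilter
    simp only [hL0]
    exact hLcont.eventually hmax
  exact second_deriv_nonpos_of_isLocalMax h1 h2 hmax'

lemma exists_sphere_max {w : EuclideanSpace ℝ (Fin n) → ℝ} (hw : Sm w)
    (hn : 0 < n) :
    ∃ x₀ : EuclideanSpace ℝ (Fin n), ‖x₀‖ = 1 ∧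
      ∀ y ∈ Metric.sphere (0 : EuclideanSpace ℝ (Fin n)) 1, w y ≤ w x₀ := by
  have hne : (Metric.sphere (0 : EuclideanSpace ℝ (Fin n)) 1).Nonempty := by
    refine ⟨eb n ⟨0, hn⟩, ?_⟩
    simp [EuclideanSpace.norm_single]
  have hsub : Metric.sphere (0 : EuclideanSpace ℝ (Fin n)) 1 ⊆ S n := by
    intro y hy
    rw [mem_sphere_zero_iff_norm] at hy
    simp only [S, Set.mem_compl_iff, Set.mem_singleton_iff]
    intro h
    rw [h, norm_zero] at hy
    exact zero_ne_one hy
  obtain ⟨x₀, hx₀mem, hx₀max⟩ := (isCompact_sphere (0 : EuclideanSpace ℝ (Fin n)) 1).exists_isMaxOn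
    hne ((hw.continuousOn).mono hsub)
  exact ⟨x₀, mem_sphere_zero_iff_norm.mp hx₀mem, fun y hy => hx₀max hy⟩

lemma nonpos_of_subsolution {w : EuclideanSpace ℝ (Fin n) → ℝ} (hw : Sm w)
    (hhom : HomOn 0 w) {b : ℝ} (hb : 0 < b)
    (hineq : ∀ x : EuclideanSpace ℝ (Fin n), x ≠ 0 → rho x * lap w x + b * w x ≤ 0)
    (hn : 0 < n) :
    ∀ x : EuclideanSpace ℝ (Fin n), x ≠ 0 → w x ≤ 0 := by
  obtain ⟨x₀, hx₀norm, hx₀max⟩ := exists_sphere_max hw hn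
  have hx₀ne : x₀ ≠ 0 := fun h => by simp [h] at hx₀norm
  -- x₀ is a global max on the punctured space
  have hglobal : ∀ y : EuclideanSpace ℝ (Fin n), y ≠ 0 → w y ≤ w x₀ := by
    intro y hy
    set z := ‖y‖⁻¹ • y with hz
    have hnorm : ‖y‖ ≠ 0 := norm_ne_zero_iff.mpr hy
    have hzmem : z ∈ Metric.sphere (0 : EuclideanSpace ℝ (Fin n)) 1 := by
      rw [mem_sphere_zero_iff_norm, hz, norm_smul]
      simp [abs_of_nonneg (norm_nonneg y), inv_mul_cancel₀ hnorm]
    have hzne : z ≠ 0 := by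
      have hzn : ‖z‖ = 1 := mem_sphere_zero_iff_norm.mp hzmem
      intro h
      rw [h] at hzn
      simp at hzn
    have : w y = w z := by
      have : y = ‖y‖ • z := by rw [hz, smul_inv_smul₀ hnorm]
      rw [this, hhom ‖y‖ (norm_pos_iff.mpr hy) z hzne, Real.rpow_zero, one_mul]
    rw [this]
    exact hx₀max z hzmem
  have hlocmax : IsLocalMax w x₀ := by
    have : ∀ᶠ y in nhds x₀, y ∈ S n := isOpen_S.eventually_mem hx₀ne
    filter_upwards [this] with y hy
    exact hglobal y hy
  have hlap : 0 ≤ lap w x₀ := lap_nonneg_of_isLocalMax hw hx₀ne hlocmax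
  have : b * w x₀ ≤ 0 := by
    have h1 := hineq x₀ hx₀ne
    nlinarith [rho_pos hx₀ne]
  have hwx₀ : w x₀ ≤ 0 := by nlinarith
  exact fun x hx => le_trans (hglobal x hx) hwx₀

lemma zero_of_solution {w : EuclideanSpace ℝ (Fin n) → ℝ} (hw : Sm w)
    (hhom : HomOn 0 w) {b : ℝ} (hb : 0 < b)
    (heq : ∀ x : EuclideanSpace ℝ (Fin n), x ≠ 0 → rho x * lap w x + b * w x = 0)
    (hn : 0 < n) :
    ∀ x : EuclideanSpace ℝ (Fin n), x ≠ 0 → w x = 0 := by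
  have h1 : ∀ x : EuclideanSpace ℝ (Fin n), x ≠ 0 → w x ≤ 0 :=
    nonpos_of_subsolution hw hhom hb (fun x hx => le_of_eq (heq x hx)) hn
  have hwneg : Sm (fun y => (-1 : ℝ) * w y) := by
    exact (contDiffOn_const.mul hw : ContDiffOn ℝ (⊤ : ℕ∞) _ _)
  have hhomneg : HomOn 0 (fun y => (-1 : ℝ) * w y) := by
    intro t ht x hx
    show (-1 : ℝ) * w (t • x) = _
    rw [hhom t ht x hx]
    ring
  have h2 : ∀ x : EuclideanSpace ℝ (Fin n), x ≠ 0 → (-1 : ℝ) * w x ≤ 0 := by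
    apply nonpos_of_subsolution hwneg hhomneg hb _ hn
    intro x hx
    rw [lap_const_mul hw (-1) hx]
    nlinarith [heq x hx]
  intro x hx
  have := h1 x hx
  have := h2 x hx
  linarith

-- SEC5: the radial power functions
lemma rho_eq_sum (x : EuclideanSpace ℝ (Fin n)) : rho x = ∑ i : Fin n, x i * x i := by
  unfold rho
  rw [PiLp.inner_apply]
  simp [RCLike.inner_apply, mul_comm]
  simp only [sq]

lemma sm_rho_rpow (γ : ℝ) : Sm (fun x : EuclideanSpace ℝ (Fin n) => rho x ^ γ) := by
  intro x hx
  apply ContDiffAt.contDiffWithinAt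
  exact (Real.contDiffAt_rpow_const_of_ne (rho_ne_zero hx)).comp x contDiff_rho.contDiffAt

lemma hasFDerivAt_rho_rpow (γ : ℝ) {x : EuclideanSpace ℝ (Fin n)} (hx : x ≠ 0) :
    HasFDerivAt (fun y => rho y ^ γ)
      ((γ * rho x ^ (γ - 1)) • ((2 : ℝ) • (innerSL ℝ x : EuclideanSpace ℝ (Fin n) →L[ℝ] ℝ))) x :=
  (Real.hasDerivAt_rpow_const (Or.inl (rho_ne_zero hx))).comp_hasFDerivAt x (hasFDerivAt_rho x)

lemma pd_rho_rpow (γ : ℝ) {x : EuclideanSpace ℝ (Fin n)} (hx : x ≠ 0) (i : Fin n) :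
    pd (fun y => rho y ^ γ) i x = γ * rho x ^ (γ - 1) * (2 * x i) := by
  unfold pd
  rw [(hasFDerivAt_rho_rpow γ hx).fderiv]
  simp only [ContinuousLinearMap.smul_apply, smul_eq_mul, innerSL_apply_apply]
  rw [inner_eb]

lemma sm_coord (i : Fin n) : Sm (fun y : EuclideanSpace ℝ (Fin n) => y i) :=
  (EuclideanSpace.proj (𝕜 := ℝ) i).contDiff.contDiffOn

lemma lap_rho_rpow (γ : ℝ) {x : EuclideanSpace ℝ (Fin n)} (hx : x ≠ 0) :
    lap (fun y => rho y ^ γ) x = -(2 * γ * (2 * γ + n - 2)) * rho x ^ (γ - 1) := by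
  rw [lap_eq]
  have hpd : ∀ i : Fin n, ∀ y ∈ S n,
      pd (fun z => rho z ^ γ) i y = γ * (rho y ^ (γ - 1) * (2 * y i)) := by
    intro i y hy
    rw [pd_rho_rpow γ hy i]
    ring
  have hterm : ∀ i : Fin n,
      fderiv ℝ (pd (fun z => rho z ^ γ) i) x (eb n i)
      = γ * ((γ - 1) * rho x ^ (γ - 1 - 1) * (2 * x i) * (2 * x i)
          + rho x ^ (γ - 1) * 2) := by
    intro i
    rw [(eventually_eq_of_S (hpd i) hx).fderiv_eq]
    have hd1 : HasFDerivAt (fun y : EuclideanSpace ℝ (Fin n) => rho y ^ (γ - 1))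
        (((γ - 1) * rho x ^ (γ - 1 - 1)) •
          ((2 : ℝ) • (innerSL ℝ x : EuclideanSpace ℝ (Fin n) →L[ℝ] ℝ))) x :=
      hasFDerivAt_rho_rpow (γ - 1) hx
    have hd2 : HasFDerivAt (fun y : EuclideanSpace ℝ (Fin n) => 2 * y i)
        ((2 : ℝ) • (EuclideanSpace.proj (𝕜 := ℝ) i)) x := by
      exact ((EuclideanSpace.proj (𝕜 := ℝ) i).hasFDerivAt (x := x)).const_smul (2:ℝ)
    have hprod := (hd1.fun_mul hd2).const_mul γ
    rw [hprod.fderiv]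
    simp only [ContinuousLinearMap.smul_apply, ContinuousLinearMap.add_apply, smul_eq_mul,
      innerSL_apply_apply, PiLp.proj_apply]
    rw [inner_eb]
    have hebi : (eb n i) i = 1 := by simp [EuclideanSpace.single_apply]
    rw [hebi]
    ring
  simp_rw [hterm]
  rw [← Finset.mul_sum]
  rw [Finset.sum_add_distrib]
  have : ∑ i : Fin n, (γ - 1) * rho x ^ (γ - 1 - 1) * (2 * x i) * (2 * x i)
      = 4 * (γ - 1) * rho x ^ (γ - 1 - 1) * rho x := by
    rw [rho_eq_sum x, Finset.mul_sum]
    apply Finset.sum_congr rfl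
    intro i _
    ring
  rw [this]
  have hρ : rho x ^ (γ - 1 - 1) * rho x = rho x ^ (γ - 1) := by
    rw [← Real.rpow_add_one (rho_ne_zero hx) (γ - 1 - 1)]
    norm_num
  have hsum2 : ∑ _i : Fin n, rho x ^ (γ - 1) * 2 = n * (rho x ^ (γ - 1) * 2) := by
    rw [Finset.sum_const, Finset.card_univ, Fintype.card_fin]
    simp [nsmul_eq_mul]
  rw [hsum2]
  have : 4 * (γ - 1) * rho x ^ (γ - 1 - 1) * rho x = 4 * (γ - 1) * rho x ^ (γ - 1) := by
    rw [mul_assoc, hρ]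
  rw [this]
  ring

/-- the key structural identity:
`Δ(ρ^γ w) = ρ^(γ-1) * ( -2γ(2γ+n-2) w + ρ Δw )` for `w` homogeneous of degree 0 -/
lemma lap_rpow_mul {γ : ℝ} {w : EuclideanSpace ℝ (Fin n) → ℝ} (hw : Sm w)
    (hhom : HomOn 0 w) {x : EuclideanSpace ℝ (Fin n)} (hx : x ≠ 0) :
    lap (fun y => rho y ^ γ * w y) x
      = rho x ^ (γ - 1) * (-(2 * γ * (2 * γ + n - 2)) * w x + rho x * lap w x) := by
  rw [lap_mul (sm_rho_rpow γ) hw hx]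
  have hcross : ∑ i : Fin n, pd (fun y => rho y ^ γ) i x * pd w i x = 0 := by
    have : ∀ i : Fin n, pd (fun y => rho y ^ γ) i x * pd w i x
        = 2 * γ * rho x ^ (γ - 1) * (x i * pd w i x) := by
      intro i
      rw [pd_rho_rpow γ hx i]
      ring
    simp_rw [this]
    rw [← Finset.mul_sum]
    have heuler : ∑ i : Fin n, x i * pd w i x = 0 := by
      have h1 : fderiv ℝ w x x = ∑ i : Fin n, x i * fderiv ℝ w x (eb n i) :=
        clm_eq_sum (fderiv ℝ w x) x
      have h2 := hom_euler hw hhom hx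
      rw [h2] at h1
      unfold pd
      rw [← h1]
      ring
    rw [heuler]
    ring
  rw [hcross, lap_rho_rpow γ hx]
  have hρ : rho x ^ (γ - 1) * rho x = rho x ^ γ := by
    rw [← Real.rpow_add_one (rho_ne_zero hx) (γ - 1)]
    norm_num
  rw [← hρ]
  ring

-- SEC6A: second and third derivative identities
lemma diffAt_fderiv {w : EuclideanSpace ℝ (Fin n) → ℝ} (hw : Sm w)
    {x : EuclideanSpace ℝ (Fin n)} (hx : x ∈ S n) :
    DifferentiableAt ℝ (fderiv ℝ w) x :=
  (((hw.fderiv_of_isOpen (m := (⊤ : ℕ∞)) isOpen_S (by simp)).differentiableOn (by simp))).differentiableAt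
    (isOpen_S.mem_nhds hx)

lemma fderiv_pd_eq {w : EuclideanSpace ℝ (Fin n) → ℝ} (hw : Sm w)
    {x : EuclideanSpace ℝ (Fin n)} (hx : x ∈ S n) (i j : Fin n) :
    fderiv ℝ (pd w j) x (eb n i) = fderiv ℝ (fderiv ℝ w) x (eb n i) (eb n j) := by
  unfold pd
  have h : fderiv ℝ (fun y => (fderiv ℝ w y) (eb n j)) x
      = ((fderiv ℝ w x).comp (fderiv ℝ (fun _ : EuclideanSpace ℝ (Fin n) => eb n j) x))
        + (fderiv ℝ (fderiv ℝ w) x).flip (eb n j) :=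
    fderiv_clm_apply (diffAt_fderiv hw hx) (differentiableAt_const _)
  rw [h]
  simp

lemma pd_symm {w : EuclideanSpace ℝ (Fin n) → ℝ} (hw : Sm w)
    {x : EuclideanSpace ℝ (Fin n)} (hx : x ∈ S n) (i j : Fin n) :
    fderiv ℝ (pd w j) x (eb n i) = fderiv ℝ (pd w i) x (eb n j) := by
  rw [fderiv_pd_eq hw hx i j, fderiv_pd_eq hw hx j i]
  have hev : ∀ᶠ y in nhds x, HasFDerivAt w (fderiv ℝ w y) y := by
    filter_upwards [isOpen_S.eventually_mem hx] with y hy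
    exact (hw.diffAt hy).hasFDerivAt
  exact second_derivative_symmetric_of_eventually hev (diffAt_fderiv hw hx).hasFDerivAt
    (eb n i) (eb n j)

/-- commuting `lap` past a partial derivative -/
lemma lap_pd_comm {w : EuclideanSpace ℝ (Fin n) → ℝ} (hw : Sm w)
    {x : EuclideanSpace ℝ (Fin n)} (hx : x ∈ S n) (i : Fin n) :
    lap (pd w i) x = fderiv ℝ (lap w) x (eb n i) := by
  -- RHS: fderiv of -∑ j (pd (pd w j) j) at x, direction eb n i
  have hRHS : fderiv ℝ (lap w) x (eb n i)
      = - ∑ j : Fin n, fderiv ℝ (pd (pd w j) j) x (eb n i) := by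
    have hlapw : (lap w) = fun y => - ∑ j : Fin n, pd (pd w j) j y := rfl
    rw [hlapw]
    rw [fderiv_fun_neg]
    have : fderiv ℝ (fun y => ∑ j : Fin n, pd (pd w j) j y) x
        = ∑ j : Fin n, fderiv ℝ (pd (pd w j) j) x := by
      rw [fderiv_fun_sum (fun j _ => (smPd (smPd hw j) j).diffAt hx)]
    simp only [ContinuousLinearMap.neg_apply, this, ContinuousLinearMap.sum_apply]
  rw [hRHS, lap_eq]
  congr 1
  refine Finset.sum_congr rfl (fun j _ => ?_)
  -- fderiv (pd (pd w i) j) x (eb n j) = fderiv (pd (pd w j) j) x (eb n i)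
  have h1 : ∀ y ∈ S n, pd (pd w i) j y = pd (pd w j) i y := by
    intro y hy
    unfold pd
    exact pd_symm hw hy j i
  rw [(eventually_eq_of_S h1 hx).fderiv_eq]
  exact pd_symm (smPd hw j) hx j i

lemma lap_pd_zero {w : EuclideanSpace ℝ (Fin n) → ℝ} (hw : Sm w)
    (hlap : ∀ y : EuclideanSpace ℝ (Fin n), y ≠ 0 → lap w y = 0)
    {x : EuclideanSpace ℝ (Fin n)} (hx : x ∈ S n) (i : Fin n) :
    lap (pd w i) x = 0 := by
  rw [lap_pd_comm hw hx i]
  have : (lap w) =ᶠ[nhds x] (fun _ => (0:ℝ)) :=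
    eventually_eq_of_S (fun y hy => hlap y hy) hx
  rw [this.fderiv_eq]
  simp

/-- differentiated Euler identity: `H·x = -∇w` for `w` homogeneous of degree 0 -/
lemma hess_euler {w : EuclideanSpace ℝ (Fin n) → ℝ} (hw : Sm w) (hhom : HomOn 0 w)
    {x : EuclideanSpace ℝ (Fin n)} (hx : x ∈ S n) (i : Fin n) :
    ∑ j : Fin n, x j * fderiv ℝ (pd w i) x (eb n j) = - pd w i x := by
  -- G y := fderiv w y y vanishes on S
  have hG : ∀ y ∈ S n, (fun z => fderiv ℝ w z z) y = (fun _ => (0:ℝ)) y := by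
    intro y hy
    simp only
    rw [hom_euler hw hhom hy]
    ring
  have hGint : fderiv ℝ (fun z => fderiv ℝ w z z) x = 0 := by
    rw [(eventually_eq_of_S hG hx).fderiv_eq]
    simp
  have hdiff : fderiv ℝ (fun z => fderiv ℝ w z z) x
      = ((fderiv ℝ w x).comp (fderiv ℝ (fun z : EuclideanSpace ℝ (Fin n) => z) x))
        + (fderiv ℝ (fderiv ℝ w) x).flip x :=
    fderiv_clm_apply (diffAt_fderiv hw hx) differentiableAt_fun_id
  have happ : (0 : EuclideanSpace ℝ (Fin n) →L[ℝ] ℝ) (eb n i)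
      = fderiv ℝ w x (eb n i) + (fderiv ℝ (fderiv ℝ w) x (eb n i)) x := by
    rw [← hGint, hdiff]
    simp
  have hev : ∀ᶠ y in nhds x, HasFDerivAt w (fderiv ℝ w y) y := by
    filter_upwards [isOpen_S.eventually_mem hx] with y hy
    exact (hw.diffAt hy).hasFDerivAt
  have hsymm : ∀ v u : EuclideanSpace ℝ (Fin n),
      fderiv ℝ (fderiv ℝ w) x v u = fderiv ℝ (fderiv ℝ w) x u v := fun v u =>
    second_derivative_symmetric_of_eventually hev (diffAt_fderiv hw hx).hasFDerivAt v u
  have hexp : (fderiv ℝ (fderiv ℝ w) x (eb n i)) x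
      = ∑ j : Fin n, x j * fderiv ℝ (pd w i) x (eb n j) := by
    rw [clm_eq_sum (fderiv ℝ (fderiv ℝ w) x (eb n i)) x]
    refine Finset.sum_congr rfl (fun j _ => ?_)
    rw [fderiv_pd_eq hw hx j i, hsymm]
  simp only [ContinuousLinearMap.zero_apply] at happ
  rw [hexp] at happ
  have hpd : pd w i x = fderiv ℝ w x (eb n i) := rfl
  rw [hpd]
  linarith

-- SEC6C: algebraic matrix inequality
lemma matrix_ineq (H : Fin n → Fin n → ℝ) (xx v : Fin n → ℝ) (ρ : ℝ)
    (hρ : 0 < ρ) (hρdef : ∑ i : Fin n, xx i * xx i = ρ)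
    (hsym : ∀ i j, H i j = H j i)
    (hHx : ∀ i, ∑ j : Fin n, xx j * H i j = - v i)
    (hxv : ∑ i : Fin n, xx i * v i = 0) :
    2 * (∑ i : Fin n, v i * v i) ≤ ρ * ∑ i : Fin n, ∑ j : Fin n, H i j * H i j := by
  set V := ∑ i : Fin n, v i * v i with hV
  have h0 : 0 ≤ ∑ i : Fin n, ∑ j : Fin n, (ρ * H i j + xx i * v j + v i * xx j)^2 :=
    Finset.sum_nonneg (fun i _ => Finset.sum_nonneg (fun j _ => sq_nonneg _))
  have hexp : ∑ i : Fin n, ∑ j : Fin n, (ρ * H i j + xx i * v j + v i * xx j)^2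
      = ρ^2 * (∑ i : Fin n, ∑ j : Fin n, H i j * H i j) - 2 * ρ * V := by
    have hpt : ∀ i j, (ρ * H i j + xx i * v j + v i * xx j)^2
        = ρ^2 * (H i j * H i j) + (xx i * xx i) * (v j * v j) + (v i * v i) * (xx j * xx j)
          + 2 * ρ * (H i j * (xx i * v j)) + 2 * ρ * (H i j * (v i * xx j))
          + 2 * ((xx i * v i) * (xx j * v j)) := by
      intro i j; ring
    simp_rw [hpt]
    simp only [Finset.sum_add_distrib]
    have hA : ∑ i : Fin n, ∑ j : Fin n, ρ^2 * (H i j * H i j)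
        = ρ^2 * ∑ i : Fin n, ∑ j : Fin n, H i j * H i j := by
      rw [Finset.mul_sum]
      exact Finset.sum_congr rfl (fun i _ => by rw [Finset.mul_sum])
    have hB : ∑ i : Fin n, ∑ j : Fin n, (xx i * xx i) * (v j * v j) = ρ * V := by
      have h1 : ∀ i, ∑ j : Fin n, (xx i * xx i) * (v j * v j) = (xx i * xx i) * V := by
        intro i; rw [← Finset.mul_sum, ← hV]
      simp_rw [h1]
      rw [← Finset.sum_mul, hρdef]
    have hC : ∑ i : Fin n, ∑ j : Fin n, (v i * v i) * (xx j * xx j) = ρ * V := by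
      have h1 : ∀ i, ∑ j : Fin n, (v i * v i) * (xx j * xx j) = (v i * v i) * ρ := by
        intro i; rw [← Finset.mul_sum, hρdef]
      simp_rw [h1]
      rw [← Finset.sum_mul, ← hV]
      ring
    have hD : ∑ i : Fin n, ∑ j : Fin n, 2 * ρ * (H i j * (xx i * v j)) = - (2 * ρ * V) := by
      rw [Finset.sum_comm]
      have : ∀ j, ∑ i : Fin n, 2 * ρ * (H i j * (xx i * v j))
          = 2 * ρ * (v j * ∑ i : Fin n, xx i * H j i) := by
        intro j
        rw [Finset.mul_sum, Finset.mul_sum]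
        refine Finset.sum_congr rfl (fun i _ => ?_)
        rw [hsym i j]; ring
      simp_rw [this, hHx]
      have h1 : ∀ j : Fin n, 2 * ρ * (v j * - v j) = -(2 * ρ * (v j * v j)) := fun j => by ring
      simp_rw [h1]
      rw [Finset.sum_neg_distrib, hV, Finset.mul_sum]
    have hE : ∑ i : Fin n, ∑ j : Fin n, 2 * ρ * (H i j * (v i * xx j)) = - (2 * ρ * V) := by
      have : ∀ i, ∑ j : Fin n, 2 * ρ * (H i j * (v i * xx j))
          = 2 * ρ * (v i * ∑ j : Fin n, xx j * H i j) := by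
        intro i
        rw [Finset.mul_sum, Finset.mul_sum]
        refine Finset.sum_congr rfl (fun j _ => by ring)
      simp_rw [this, hHx]
      have h1 : ∀ i : Fin n, 2 * ρ * (v i * - v i) = -(2 * ρ * (v i * v i)) := fun i => by ring
      simp_rw [h1]
      rw [Finset.sum_neg_distrib, hV, Finset.mul_sum]
    have hF : ∑ i : Fin n, ∑ j : Fin n, 2 * ((xx i * v i) * (xx j * v j)) = 0 := by
      have : ∀ i, ∑ j : Fin n, 2 * ((xx i * v i) * (xx j * v j))
          = 2 * (xx i * v i) * ∑ j : Fin n, xx j * v j := by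
        intro i
        rw [Finset.mul_sum]
        exact Finset.sum_congr rfl (fun j _ => by ring)
      simp_rw [this, hxv]
      simp
    rw [hA, hB, hC, hD, hE, hF]
    ring
  rw [hexp] at h0
  nlinarith [h0, hρ]

-- SEC6D: a degree-0 homogeneous harmonic function on the punctured space is constant
lemma hom_rho : HomOn (n := n) 2 rho := by
  intro t ht x hx
  rw [rho_smul]
  congr 1
  rw [← Real.rpow_natCast t 2]
  norm_num

lemma hom_sum {β : ℝ} {ι : Type*} {t : Finset ι} {F : ι → EuclideanSpace ℝ (Fin n) → ℝ}
    (h : ∀ j ∈ t, HomOn β (F j)) : HomOn β (fun x => ∑ j ∈ t, F j x) := by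
  intro s hs x hx
  show ∑ j ∈ t, F j (s • x) = _
  rw [Finset.mul_sum]
  exact Finset.sum_congr rfl (fun j hj => h j hj s hs x hx)

lemma sm_rho : Sm (rho (n := n)) := contDiff_rho.contDiffOn

lemma const_of_harmonic {w : EuclideanSpace ℝ (Fin n) → ℝ} (hw : Sm w) (hhom : HomOn 0 w)
    (hlap : ∀ x : EuclideanSpace ℝ (Fin n), x ≠ 0 → lap w x = 0) (hn : 3 ≤ n) :
    ∃ c : ℝ, ∀ x : EuclideanSpace ℝ (Fin n), x ≠ 0 → w x = c := by
  have hn0 : 0 < n := by omega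
  set V : EuclideanSpace ℝ (Fin n) → ℝ := fun y => ∑ i : Fin n, pd w i y * pd w i y with hVdef
  set W : EuclideanSpace ℝ (Fin n) → ℝ := fun y => rho y * V y with hWdef
  have smV : Sm V := ContDiffOn.sum (fun i _ => (smPd hw i).mul (smPd hw i))
  have smW : Sm W := sm_rho.mul smV
  have homvi : ∀ i : Fin n, HomOn (-1) (pd w i) := by
    intro i
    have := hom_pd hw hhom i
    have h : (0:ℝ) - 1 = -1 := by norm_num
    rwa [h] at this
  have homV : HomOn (-2) V := by
    have : HomOn (-2) (fun y => ∑ i : Fin n, pd w i y * pd w i y) := by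
      apply hom_sum
      intro i _
      have := hom_mul (homvi i) (homvi i)
      have h : (-1:ℝ) + -1 = -2 := by norm_num
      rwa [h] at this
    exact this
  have homW : HomOn 0 W := by
    have := hom_mul hom_rho homV
    have h : (2:ℝ) + -2 = 0 := by norm_num
    rwa [h] at this
  -- Laplacian computations
  have hlapV : ∀ x : EuclideanSpace ℝ (Fin n), x ≠ 0 →
      lap V x = -2 * ∑ i : Fin n, ∑ j : Fin n,
        fderiv ℝ (pd w i) x (eb n j) * fderiv ℝ (pd w i) x (eb n j) := by
    intro x hx
    have h1 : lap V x = ∑ i : Fin n, lap (fun y => pd w i y * pd w i y) x :=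
      lap_sum Finset.univ (fun i _ => (smPd hw i).mul (smPd hw i)) hx
    rw [h1]
    have h2 : ∀ i : Fin n, lap (fun y => pd w i y * pd w i y) x
        = -2 * ∑ j : Fin n, fderiv ℝ (pd w i) x (eb n j) * fderiv ℝ (pd w i) x (eb n j) := by
      intro i
      rw [lap_mul (smPd hw i) (smPd hw i) hx]
      rw [lap_pd_zero hw hlap hx i]
      have : ∀ j : Fin n, pd (pd w i) j x = fderiv ℝ (pd w i) x (eb n j) := fun j => rfl
      simp_rw [this]
      ring
    simp_rw [h2]
    rw [← Finset.mul_sum]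
  have hlaprho : ∀ x : EuclideanSpace ℝ (Fin n), x ≠ 0 → lap rho x = -(2 * n) := by
    intro x hx
    have hfun : (fun y : EuclideanSpace ℝ (Fin n) => rho y ^ (1:ℝ)) = rho :=
      funext fun y => Real.rpow_one _
    have := lap_rho_rpow (n := n) 1 hx
    rw [hfun] at this
    rw [this]
    norm_num [Real.rpow_zero]
  have hpdrho : ∀ x : EuclideanSpace ℝ (Fin n), x ≠ 0 → ∀ i, pd rho i x = 2 * x i := by
    intro x hx i
    have hfun : (fun y : EuclideanSpace ℝ (Fin n) => rho y ^ (1:ℝ)) = rho :=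
      funext fun y => Real.rpow_one _
    have := pd_rho_rpow (n := n) 1 hx i
    rw [hfun] at this
    rw [this]
    norm_num [Real.rpow_zero]
  -- the key differential inequality for W
  have hkey : ∀ x : EuclideanSpace ℝ (Fin n), x ≠ 0 →
      rho x * lap W x + (2 * n - 4) * W x ≤ 0 := by
    intro x hx
    have hlapW : lap W x = rho x * lap V x + V x * lap rho x
        - 2 * ∑ i : Fin n, pd rho i x * pd V i x := lap_mul sm_rho smV hx
    have hcross : ∑ i : Fin n, pd rho i x * pd V i x = 2 * (-2 * V x) := by
      have h1 : ∀ i : Fin n, pd rho i x * pd V i x = 2 * (x i * pd V i x) := by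
        intro i
        rw [hpdrho x hx i]
        ring
      simp_rw [h1]
      rw [← Finset.mul_sum]
      congr 1
      have h2 : fderiv ℝ V x x = ∑ i : Fin n, x i * fderiv ℝ V x (eb n i) :=
        clm_eq_sum (fderiv ℝ V x) x
      have h3 := hom_euler smV homV hx
      unfold pd
      rw [← h2, h3]
    -- the matrix inequality
    have hmat : 2 * (∑ i : Fin n, pd w i x * pd w i x)
        ≤ rho x * ∑ i : Fin n, ∑ j : Fin n,
            fderiv ℝ (pd w i) x (eb n j) * fderiv ℝ (pd w i) x (eb n j) := by
      apply matrix_ineq (fun i j => fderiv ℝ (pd w i) x (eb n j))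
        (fun i => x i) (fun i => pd w i x) (rho x) (rho_pos hx)
      · exact (rho_eq_sum x).symm
      · intro i j
        exact pd_symm hw hx j i
      · intro i
        exact hess_euler hw hhom hx i
      · have h2 := hom_euler hw hhom hx
        rw [clm_eq_sum (fderiv ℝ w x) x] at h2
        rw [zero_mul] at h2
        exact h2
    rw [hlapW, hlapV x hx, hlaprho x hx, hcross]
    have hVx : V x = ∑ i : Fin n, pd w i x * pd w i x := rfl
    have hWx : W x = rho x * V x := rfl
    rw [hWx]
    nlinarith [rho_pos hx, hmat, Finset.sum_nonneg
      (fun i (_ : i ∈ Finset.univ) => mul_self_nonneg (pd w i x))]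
  -- conclude W ≡ 0, so all partial derivatives vanish
  have hb : (0:ℝ) < 2 * n - 4 := by
    have : (3:ℝ) ≤ n := by exact_mod_cast hn
    linarith
  have hWle := nonpos_of_subsolution smW homW hb hkey hn0
  have hWzero : ∀ x : EuclideanSpace ℝ (Fin n), x ≠ 0 → W x = 0 := by
    intro x hx
    have h1 := hWle x hx
    have h2 : 0 ≤ W x := mul_nonneg (rho_nonneg x)
      (Finset.sum_nonneg (fun i _ => mul_self_nonneg (pd w i x)))
    linarith
  have hpdzero : ∀ x : EuclideanSpace ℝ (Fin n), x ≠ 0 → ∀ i, pd w i x = 0 := by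
    intro x hx i
    have hV0 : V x = 0 := by
      have := hWzero x hx
      have hρ := rho_pos hx
      have hWx : W x = rho x * V x := rfl
      rw [hWx] at this
      exact (mul_eq_zero.mp this).resolve_left hρ.ne'
    have := (Finset.sum_eq_zero_iff_of_nonneg
      (fun j (_ : j ∈ Finset.univ) => mul_self_nonneg (pd w j x))).mp hV0 i (Finset.mem_univ i)
    nlinarith [this]
  have hfderiv_zero : ∀ x : EuclideanSpace ℝ (Fin n), x ≠ 0 → fderiv ℝ w x = 0 := by
    intro x hx
    ext z
    rw [clm_eq_sum (fderiv ℝ w x) z]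
    have : ∀ i : Fin n, z i * fderiv ℝ w x (eb n i) = 0 := by
      intro i
      have := hpdzero x hx i
      unfold pd at this
      rw [this, mul_zero]
    simp_rw [this]
    simp
  -- connectivity argument
  have hrank : 1 < Module.rank ℝ (EuclideanSpace ℝ (Fin n)) := by
    have hfr : Module.finrank ℝ (EuclideanSpace ℝ (Fin n)) = n := finrank_euclideanSpace_fin
    rw [← Module.finrank_eq_rank, hfr]
    exact_mod_cast (by omega : 1 < n)
  have hpre : IsPreconnected (S n) :=
    (isConnected_compl_singleton_of_one_lt_rank hrank 0).isPreconnected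
  set x₀ : EuclideanSpace ℝ (Fin n) := eb n ⟨0, hn0⟩ with hx₀def
  have hx₀norm : ‖x₀‖ = 1 := by simp [hx₀def, EuclideanSpace.norm_single]
  have hx₀ne : x₀ ≠ 0 := fun h => by rw [h, norm_zero] at hx₀norm; exact zero_ne_one hx₀norm
  refine ⟨w x₀, ?_⟩
  set c := w x₀ with hc
  set U : Set (EuclideanSpace ℝ (Fin n)) := {x | x ∈ S n ∧ w x = c} with hU
  set U' : Set (EuclideanSpace ℝ (Fin n)) := {x | x ∈ S n ∧ w x ≠ c} with hU'
  have hUopen : IsOpen U := by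
    rw [Metric.isOpen_iff]
    intro x hxU
    obtain ⟨ε, hε, hball⟩ := Metric.isOpen_iff.mp isOpen_S x hxU.1
    refine ⟨ε, hε, ?_⟩
    intro y hy
    refine ⟨hball hy, ?_⟩
    have hconst : ∀ z ∈ Metric.ball x ε, w z = w x := by
      intro z hz
      apply Convex.is_const_of_fderivWithin_eq_zero (convex_ball x ε)
        ((hw.differentiableOn (by simp)).mono hball)
        (fun y' hy' => ?_) hz (Metric.mem_ball_self hε)
      rw [fderivWithin_of_isOpen Metric.isOpen_ball hy']
      exact hfderiv_zero y' (hball hy')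
    rw [hconst y hy, hxU.2]
  have hU'open : IsOpen U' := by
    rw [isOpen_iff_mem_nhds]
    intro x hxU'
    have hcont : ContinuousAt w x :=
      (hw.continuousOn.continuousAt (isOpen_S.mem_nhds hxU'.1))
    have h1 : ∀ᶠ y in nhds x, w y ≠ c := hcont.eventually_ne hxU'.2
    have h2 : ∀ᶠ y in nhds x, y ∈ S n := isOpen_S.eventually_mem hxU'.1
    filter_upwards [h1, h2] with y hy1 hy2
    exact ⟨hy2, hy1⟩
  have hsub : S n ⊆ U ∪ U' := by
    intro x hx
    by_cases h : w x = c
    · exact Or.inl ⟨hx, h⟩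
    · exact Or.inr ⟨hx, h⟩
  have hdisj : Disjoint U U' := by
    rw [Set.disjoint_left]
    intro x hxU hxU'
    exact hxU'.2 hxU.2
  have hne : (S n ∩ U).Nonempty := ⟨x₀, hx₀ne, hx₀ne, rfl⟩
  have := hpre.subset_left_of_subset_union hUopen hU'open hdisj hsub hne
  intro x hx
  exact (this hx).2

-- SEC7: assembly
lemma hom_add {β : ℝ} {f g : EuclideanSpace ℝ (Fin n) → ℝ}
    (hf : HomOn β f) (hg : HomOn β g) : HomOn β (fun x => f x + g x) := by
  intro t ht x hx
  show f (t • x) + g (t • x) = _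
  rw [hf t ht x hx, hg t ht x hx]
  ring

lemma hom_const_mul {β : ℝ} {f : EuclideanSpace ℝ (Fin n) → ℝ} (c : ℝ)
    (hf : HomOn β f) : HomOn β (fun x => c * f x) := by
  intro t ht x hx
  show c * f (t • x) = _
  rw [hf t ht x hx]
  ring

lemma main (n k : ℕ) (hk : 1 ≤ k) (hn : 2 * k + 1 ≤ n)
    (u : EuclideanSpace ℝ (Fin n) → ℝ)
    (hsmooth : ContDiffOn ℝ (⊤ : ℕ∞) u {(0 : EuclideanSpace ℝ (Fin n))}ᶜ)
    (hhom : ∀ t : ℝ, 0 < t → ∀ x : EuclideanSpace ℝ (Fin n), x ≠ 0 →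
      u (t • x) = t ^ (2 * (k : ℝ) - n) * u x)
    (hharm : ∀ x : EuclideanSpace ℝ (Fin n), x ≠ 0 → lapIter k u x = 0) :
    ∃ c : ℝ, ∀ x : EuclideanSpace ℝ (Fin n), x ≠ 0 →
      u x = c * ‖x‖ ^ (2 * (k : ℝ) - n) := by
  have hn3 : 3 ≤ n := by omega
  have hn0 : 0 < n := by omega
  have hsm_u : Sm u := hsmooth
  have hom_u : HomOn (2 * (k:ℝ) - n) u := hhom
  set σ : ℝ := ((n:ℝ) - 2*k)/2 with hσ
  set g : EuclideanSpace ℝ (Fin n) → ℝ := fun x => rho x ^ σ * u x with hg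
  have sm_g : Sm g := (sm_rho_rpow σ).mul hsm_u
  have hom_g : HomOn 0 g := by
    have := hom_mul (hom_rho_rpow σ) hom_u
    have harith : 2*σ + (2*(k:ℝ) - n) = 0 := by rw [hσ]; ring
    rwa [harith] at this
  set gam : ℕ → ℝ := fun m => (2*(k:ℝ) - n)/2 - m with hgam
  set Bf : ℕ → ℝ := fun m => -(2 * gam m * (2 * gam m + n - 2)) with hBf
  set Q : ℕ → EuclideanSpace ℝ (Fin n) → ℝ :=
    fun m => Nat.rec g (fun m Qm => fun x => Bf m * Qm x + rho x * lap Qm x) m with hQdef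
  have hQ0 : Q 0 = g := rfl
  have hQs : ∀ m, Q (m+1) = fun x => Bf m * Q m x + rho x * lap (Q m) x := fun m => rfl
  -- upward induction: Q m is smooth, homogeneous of degree 0, and represents lapIter m u
  have hup : ∀ m : ℕ, Sm (Q m) ∧ HomOn 0 (Q m) ∧
      (∀ x : EuclideanSpace ℝ (Fin n), x ≠ 0 →
        lapIter m u x = rho x ^ (gam m) * Q m x) := by
    intro m
    induction m with
    | zero =>
      refine ⟨sm_g, hom_g, ?_⟩
      intro x hx
      show u x = rho x ^ (gam 0) * (rho x ^ σ * u x)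
      rw [← mul_assoc, ← Real.rpow_add (rho_pos hx)]
      have harith : gam 0 + σ = 0 := by rw [hgam, hσ]; push_cast; ring
      rw [harith, Real.rpow_zero, one_mul]
    | succ m ih =>
      obtain ⟨hsmQ, homQ, hiter⟩ := ih
      have smQ1 : Sm (Q (m+1)) := by
        rw [hQs m]
        exact (contDiffOn_const.mul hsmQ).add (sm_rho.mul (smLap hsmQ))
      have homQ1 : HomOn 0 (Q (m+1)) := by
        rw [hQs m]
        apply hom_add (hom_const_mul (Bf m) homQ)
        have := hom_mul hom_rho (hom_lap hsmQ homQ)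
        have harith : (2:ℝ) + (0 - 2) = 0 := by ring
        rwa [harith] at this
      refine ⟨smQ1, homQ1, ?_⟩
      intro x hx
      have h1 : lapIter (m+1) u x = lap (lapIter m u) x := by
        show (lap^[m+1]) u x = _
        rw [Function.iterate_succ_apply']
        rfl
      rw [h1]
      have h2 : lap (lapIter m u) x = lap (fun y => rho y ^ (gam m) * Q m y) x :=
        lap_congr (fun y hy => hiter y hy) hx
      rw [h2, lap_rpow_mul hsmQ homQ hx]
      have h3 : gam (m+1) = gam m - 1 := by rw [hgam]; push_cast; ring
      rw [h3, hQs m]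
  -- Q k vanishes
  have hQk : ∀ x : EuclideanSpace ℝ (Fin n), x ≠ 0 → Q k x = 0 := by
    intro x hx
    have h1 := (hup k).2.2 x hx
    rw [hharm x hx] at h1
    have hpos := Real.rpow_pos_of_pos (rho_pos hx) (gam k)
    exact (mul_eq_zero.mp h1.symm).resolve_left hpos.ne'
  -- the top coefficient vanishes
  have hBk1 : Bf (k-1) = 0 := by
    have hcast : ((k-1 : ℕ):ℝ) = (k:ℝ) - 1 := by
      push_cast [Nat.cast_sub hk]
      ring
    show -(2 * gam (k-1) * (2 * gam (k-1) + n - 2)) = 0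
    rw [hgam]
    simp only
    rw [hcast]
    ring
  -- Q (k-1) is constant (harmonic step)
  have hQk1 : ∃ c : ℝ, ∀ x : EuclideanSpace ℝ (Fin n), x ≠ 0 → Q (k-1) x = c := by
    obtain ⟨smQ, homQ, -⟩ := hup (k-1)
    apply const_of_harmonic smQ homQ ?_ hn3
    intro x hx
    have hsucc : k - 1 + 1 = k := by omega
    have h2 : Q (k-1+1) x = Bf (k-1) * Q (k-1) x + rho x * lap (Q (k-1)) x := by
      rw [hQs (k-1)]
    rw [hsucc, hQk x hx] at h2
    rw [hBk1, zero_mul, zero_add] at h2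
    exact (mul_eq_zero.mp h2.symm).resolve_left (rho_ne_zero hx)
  -- downward step for positive coefficients
  have hstep : ∀ m : ℕ, m + 2 ≤ k →
      (∃ c : ℝ, ∀ x : EuclideanSpace ℝ (Fin n), x ≠ 0 → Q (m+1) x = c) →
      ∃ c : ℝ, ∀ x : EuclideanSpace ℝ (Fin n), x ≠ 0 → Q m x = c := by
    intro m hm hc'
    obtain ⟨c, hc⟩ := hc'
    obtain ⟨smQ, homQ, -⟩ := hup m
    have hBpos : 0 < Bf m := by
      show 0 < -(2 * gam m * (2 * gam m + n - 2))
      rw [hgam]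
      simp only
      have h1 : (m:ℝ) + 2 ≤ (k:ℝ) := by exact_mod_cast hm
      have h2 : 2*(k:ℝ) + 1 ≤ (n:ℝ) := by exact_mod_cast hn
      nlinarith
    refine ⟨c / Bf m, ?_⟩
    have hhomw : HomOn 0 (fun x => Q m x - c / Bf m) := by
      intro t ht x hx
      show Q m (t • x) - c / Bf m = _
      rw [homQ t ht x hx, Real.rpow_zero]
      ring
    have hsmw : Sm (fun x => Q m x - c / Bf m) := smQ.sub contDiffOn_const
    have heqw : ∀ x : EuclideanSpace ℝ (Fin n), x ≠ 0 →
        rho x * lap (fun y => Q m y - c / Bf m) x + Bf m * (Q m x - c / Bf m) = 0 := by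
      intro x hx
      rw [lap_sub_const (f := Q m) (c := c / Bf m)]
      have h2 : Bf m * Q m x + rho x * lap (Q m) x = c := by
        have := hc x hx
        rw [hQs m] at this
        exact this
      field_simp
      linarith
    have hres := zero_of_solution hsmw hhomw hBpos heqw hn0
    intro x hx
    have := hres x hx
    linarith [this]
  -- full downward induction
  have hdownall : ∀ j : ℕ, j ≤ k - 1 →
      ∃ c : ℝ, ∀ x : EuclideanSpace ℝ (Fin n), x ≠ 0 → Q (k - 1 - j) x = c := by
    intro j
    induction j with
    | zero =>
      intro _
      simpa using hQk1
    | succ j ih =>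
      intro hj
      have h1 := ih (by omega)
      have harr : k - 1 - j = (k - 1 - (j+1)) + 1 := by omega
      apply hstep (k - 1 - (j+1)) (by omega)
      rw [harr] at h1
      exact h1
  have hQ0c : ∃ c : ℝ, ∀ x : EuclideanSpace ℝ (Fin n), x ≠ 0 → Q 0 x = c := by
    have := hdownall (k-1) le_rfl
    have harr : k - 1 - (k-1) = 0 := by omega
    rwa [harr] at this
  obtain ⟨c, hc⟩ := hQ0c
  refine ⟨c, ?_⟩
  intro x hx
  have h1 : rho x ^ σ * u x = c := hc x hx
  have h2 : u x = rho x ^ (-σ) * (rho x ^ σ * u x) := by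
    rw [← mul_assoc, ← Real.rpow_add (rho_pos hx)]
    simp
  rw [h2, h1]
  have h3 : rho x ^ (-σ) = ‖x‖ ^ (2*(k:ℝ) - n) := by
    rw [rho_eq_norm_sq, ← Real.rpow_natCast ‖x‖ 2, ← Real.rpow_mul (norm_nonneg x)]
    congr 1
    rw [hσ]
    push_cast
    ring
  rw [h3]
  ring

end RadialProof

theorem homogeneous_polyharmonic_of_degree_two_k_sub_n_is_radial
    (n k : ℕ) (hk : 1 ≤ k) (hn : 2 * k + 1 ≤ n)
    (u : EuclideanSpace ℝ (Fin n) → ℝ)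
    (hsmooth : ContDiffOn ℝ (⊤ : ℕ∞) u {(0 : EuclideanSpace ℝ (Fin n))}ᶜ)
    (hhom : ∀ t : ℝ, 0 < t → ∀ x : EuclideanSpace ℝ (Fin n), x ≠ 0 →
      u (t • x) = t ^ (2 * (k : ℝ) - n) * u x)
    (hharm : ∀ x : EuclideanSpace ℝ (Fin n), x ≠ 0 → lapIter k u x = 0) :
    ∃ c : ℝ, ∀ x : EuclideanSpace ℝ (Fin n), x ≠ 0 →
      u x = c * ‖x‖ ^ (2 * (k : ℝ) - n) := by
  exact RadialProof.main n k hk hn u hsmooth hhom hharm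
end

section
/- Let n ≥ 1 and k ≥ 1 be integers. For every x ∈ ℝⁿ with x ≠ 0, the k-fold iterated Laplacian of the logarithm of the norm satisfies Δ₀ᵏ (log ‖·‖)(x) = −2^{k−1} (k−1)! · (n−2)(n−4)⋯(n−2k) · ‖x‖^{−2k}. -/
open MeasureTheory Real

/-!
For a radial function `f y = φ (‖y‖ ^ 2)` the chain rule gives
`Δ₀ f x = -(4 t φ''(t) + 2 n φ'(t))` at `t = ‖x‖ ^ 2`, `x ≠ 0`. With `φ = log / 2` this yields
`Δ₀ log ‖·‖ = -(n - 2) ‖·‖⁻²`, and with `φ t = t ^ (a / 2)` it yields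
`Δ₀ ‖·‖ ^ a = -a (a + n - 2) ‖·‖ ^ (a - 2)`. Since `Δ₀` only sees a function near the point,
the closed form of `Δ₀ᵏ log ‖·‖` on `ℝⁿ ∖ {0}` can be fed back in, and each further application
with `a = -2k` contributes the factor `2k (n - 2(k + 1))`.
-/

open Topology

theorem HasDerivAt.hasFDerivAt_comp_norm_sq {F : Type*} [NormedAddCommGroup F]
    [InnerProductSpace ℝ F] {φ : ℝ → ℝ} {φ' : ℝ} {x : F} (h : HasDerivAt φ φ' (‖x‖ ^ 2)) :
    HasFDerivAt (fun y => φ (‖y‖ ^ 2)) (φ' • 2 • innerSL ℝ x) x :=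
  h.comp_hasFDerivAt x (hasStrictFDerivAt_norm_sq x).hasFDerivAt

variable {n : ℕ}

theorem Filter.EventuallyEq.lap_eq {f g : EuclideanSpace ℝ (Fin n) → ℝ}
    {x : EuclideanSpace ℝ (Fin n)} (h : f =ᶠ[𝓝 x] g) : lap f x = lap g x := by
  have hpartial (i : Fin n) : (fun y => fderiv ℝ f y (EuclideanSpace.single i 1)) =ᶠ[𝓝 x]
      fun y => fderiv ℝ g y (EuclideanSpace.single i 1) :=
    (h.fderiv (𝕜 := ℝ)).mono fun y hy => by simp only [hy]
  unfold lap
  congr 1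
  exact Finset.sum_congr rfl fun i _ => by rw [(hpartial i).fderiv_eq]

section Radial

variable {φ φ' φ'' : ℝ → ℝ} {x : EuclideanSpace ℝ (Fin n)}

theorem fderiv_fderiv_comp_norm_sq_single
    (hφ : ∀ t, 0 < t → HasDerivAt φ (φ' t) t) (hφ' : ∀ t, 0 < t → HasDerivAt φ' (φ'' t) t)
    (hx : x ≠ 0) (i : Fin n) :
    fderiv ℝ (fun y => fderiv ℝ (fun z => φ (‖z‖ ^ 2)) y (EuclideanSpace.single i 1)) x
        (EuclideanSpace.single i 1) =
      2 * φ' (‖x‖ ^ 2) + 4 * φ'' (‖x‖ ^ 2) * x i ^ 2 := by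
  have hpos {y : EuclideanSpace ℝ (Fin n)} (hy : y ≠ 0) : 0 < ‖y‖ ^ 2 :=
    pow_pos (norm_pos_iff.mpr hy) 2
  have hpartial : (fun y => fderiv ℝ (fun z => φ (‖z‖ ^ 2)) y (EuclideanSpace.single i 1))
      =ᶠ[𝓝 x] fun y => φ' (‖y‖ ^ 2) * (2 * y i) := by
    filter_upwards [eventually_ne_nhds hx] with y hy
    simp [(hφ _ (hpos hy)).hasFDerivAt_comp_norm_sq.fderiv, EuclideanSpace.inner_single_right]
  have hcoord : HasFDerivAt (fun y : EuclideanSpace ℝ (Fin n) => 2 * y i)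
      ((2 : ℝ) • PiLp.proj 2 (fun _ => ℝ) i) x :=
    (PiLp.hasFDerivAt_apply (𝕜 := ℝ) 2 x i).const_mul 2
  have hprod : HasFDerivAt (fun y => φ' (‖y‖ ^ 2) * (2 * y i)) _ x :=
    (hφ' _ (hpos hx)).hasFDerivAt_comp_norm_sq.mul hcoord
  rw [hpartial.fderiv_eq, hprod.fderiv]
  simp only [add_apply, smul_apply, PiLp.proj_apply, PiLp.single_eq_same, coe_innerSL_apply,
    EuclideanSpace.inner_single_right, smul_eq_mul, nsmul_eq_mul, mul_one, one_mul, conj_trivial,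
    Nat.cast_ofNat]
  ring

theorem lap_comp_norm_sq
    (hφ : ∀ t, 0 < t → HasDerivAt φ (φ' t) t) (hφ' : ∀ t, 0 < t → HasDerivAt φ' (φ'' t) t)
    (hx : x ≠ 0) :
    lap (fun y => φ (‖y‖ ^ 2)) x = -(4 * ‖x‖ ^ 2 * φ'' (‖x‖ ^ 2) + 2 * n * φ' (‖x‖ ^ 2)) := by
  simp only [lap, fderiv_fderiv_comp_norm_sq_single hφ hφ' hx, Finset.sum_add_distrib,
    ← Finset.mul_sum, ← EuclideanSpace.real_norm_sq_eq, Finset.sum_const, Finset.card_univ,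
    Fintype.card_fin, nsmul_eq_mul]
  ring

end Radial

theorem lap_log_norm {x : EuclideanSpace ℝ (Fin n)} (hx : x ≠ 0) :
    lap (fun y => log ‖y‖) x = -(n - 2) * ‖x‖ ^ (-2 : ℝ) := by
  have hlog : (fun y : EuclideanSpace ℝ (Fin n) => log ‖y‖) = fun y => log (‖y‖ ^ 2) / 2 := by
    ext y
    rw [Real.log_pow]
    ring
  have hφ (t : ℝ) (ht : 0 < t) : HasDerivAt (fun t => log t / 2) (2 * t)⁻¹ t :=
    ((hasDerivAt_log ht.ne').div_const 2).congr_deriv (by ring)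
  have hφ' (t : ℝ) (ht : 0 < t) : HasDerivAt (fun t => (2 * t)⁻¹) (-(2 * t ^ 2)⁻¹) t :=
    (((hasDerivAt_id t).const_mul 2).inv (by simp [ht.ne'])).congr_deriv
      (by simp only [mul_one, id_eq, mul_inv_rev]; ring)
  have hx' : ‖x‖ ≠ 0 := norm_ne_zero_iff.mpr hx
  rw [hlog, lap_comp_norm_sq hφ hφ' hx, rpow_neg (norm_nonneg x), rpow_two]
  field_simp
  ring

theorem lap_const_mul_norm_rpow (c a : ℝ) {x : EuclideanSpace ℝ (Fin n)} (hx : x ≠ 0) :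
    lap (fun y => c * ‖y‖ ^ a) x = -(a * (a + n - 2)) * c * ‖x‖ ^ (a - 2) := by
  have hsq (y : EuclideanSpace ℝ (Fin n)) (b : ℝ) : ‖y‖ ^ b = (‖y‖ ^ 2) ^ (b / 2) := by
    rw [← rpow_two, ← rpow_mul (norm_nonneg y)]
    ring_nf
  have hφ (t : ℝ) (ht : 0 < t) :
      HasDerivAt (fun t => c * t ^ (a / 2)) (c * (a / 2 * t ^ (a / 2 - 1))) t :=
    (hasDerivAt_rpow_const (Or.inl ht.ne')).const_mul c
  have hφ' (t : ℝ) (ht : 0 < t) :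
      HasDerivAt (fun t => c * (a / 2 * t ^ (a / 2 - 1)))
        (c * (a / 2 * ((a / 2 - 1) * t ^ (a / 2 - 1 - 1)))) t :=
    (((hasDerivAt_rpow_const (Or.inl ht.ne')).const_mul (a / 2)).const_mul c)
  have hT : 0 < ‖x‖ ^ 2 := pow_pos (norm_pos_iff.mpr hx) 2
  simp only [hsq _ a]
  rw [lap_comp_norm_sq hφ hφ' hx, hsq x, show (a - 2) / 2 = a / 2 - 1 by ring,
    rpow_sub hT (a / 2 - 1), rpow_one]
  field_simp
  ring

theorem iterated_laplacian_of_log_norm_general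
    (n k : ℕ) (hk : 1 ≤ k) :
    ∀ x : EuclideanSpace ℝ (Fin n), x ≠ 0 →
      lapIter k (fun y => Real.log ‖y‖) x =
        -(2 ^ (k - 1) * (Nat.factorial (k - 1)) *
            ∏ j ∈ Finset.range k, ((n : ℝ) - 2 * (j + 1))) *
          ‖x‖ ^ (-(2 * (k : ℝ))) := by
  induction k, hk using Nat.le_induction with
  | base =>
    intro x hx
    simp only [lapIter, Function.iterate_one, lap_log_norm hx]
    norm_num
  | succ k hk ih =>
    intro x hx
    obtain ⟨m, rfl⟩ : ∃ m, k = m + 1 := ⟨k - 1, by omega⟩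
    have hclosed : lapIter (m + 1) (fun y => log ‖y‖) =ᶠ[𝓝 x] _ :=
      (eventually_ne_nhds hx).mono ih
    rw [lapIter, Function.iterate_succ_apply', ← lapIter, hclosed.lap_eq,
      lap_const_mul_norm_rpow _ _ hx, Finset.prod_range_succ _ (m + 1)]
    simp only [Nat.add_sub_cancel, Nat.factorial_succ, pow_succ]
    push_cast
    ring_nf

theorem iterated_laplacian_of_log_norm
    (n k : ℕ) (hn : 1 ≤ n) (hk : 1 ≤ k) :
    ∀ x : EuclideanSpace ℝ (Fin n), x ≠ 0 →
      lapIter k (fun y => Real.log ‖y‖) x =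
        -(2 ^ (k - 1) * (Nat.factorial (k - 1)) *
            ∏ j ∈ Finset.range k, ((n : ℝ) - 2 * (j + 1))) *
          ‖x‖ ^ (-(2 * (k : ℝ))) :=
  iterated_laplacian_of_log_norm_general n k hk
end
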